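/- For m odd, the functions F_k are invariant under the Kahan map: if ỹ is defined by the Kahan formula ỹ_j = y_j(1−ε²H²)/((1−εH+2ε u_{j−1})(1−εH+2ε u_j)), then F_k(ỹ) = F_k(y), where F_k = (∑_{ℓ=1}^{2k-1} y_ℓ)·∏_{s=k}^{(m-1)/2} (y_{2s+1}/y_{2s}). -/

import Mathlib

/-!
Write `d_j = 1 - εH + 2εu_j`, so that `ỹ_j = (1 - ε²H²) y_j / (d_{j-1} d_j)`, `d_0 = 1 - εH` and,
`m` being odd with `u_m = H`, `d_m = 1 + εH`. Since `d_j - d_{j-1} = 2εy_j`, the partial sums telescope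
to `ũ_j = (1 - ε²H²) u_j / (d_0 d_j)`, and the ratios satisfy
`ỹ_{2s+1} / ỹ_{2s} = (y_{2s+1} / y_{2s}) (d_{2s-1} / d_{2s+1})`, so the product in `F_k(ỹ)` is that of
`F_k(y)` times `d_{2k-1} / d_m`. Multiplying, `d_{2k-1}` cancels and `1 - ε²H² = d_0 d_m` cancels.
-/

/-- `u_j = y_1 + ⋯ + y_j` (1-based indexing; `usum y 0 = 0`). -/
noncomputable def usum (y : ℕ → ℝ) (j : ℕ) : ℝ := ∑ l ∈ Finset.Icc 1 j, y l

/-- `F_k = (y_1 + ⋯ + y_{2k-1}) ∏_{s=k}^{(m-1)/2} y_{2s+1}/y_{2s}` (for `m` odd). -/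
noncomputable def FkN (m k : ℕ) (y : ℕ → ℝ) : ℝ :=
  (∑ l ∈ Finset.Icc 1 (2 * k - 1), y l) *
    ∏ s ∈ Finset.Icc k ((m - 1) / 2), y (2 * s + 1) / y (2 * s)

open Finset

lemma usum_zero (y : ℕ → ℝ) : usum y 0 = 0 := by
  simp [usum]

lemma usum_succ (y : ℕ → ℝ) (j : ℕ) : usum y (j + 1) = usum y j + y (j + 1) :=
  sum_Icc_succ_top (by omega) y

lemma prod_Ico_div_succ_of_ne_zero {G₀ : Type*} [CommGroupWithZero G₀] (g : ℕ → G₀) {k n : ℕ}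
    (hkn : k ≤ n) (hg : ∀ s ∈ Icc k n, g s ≠ 0) :
    ∏ s ∈ Ico k n, g s / g (s + 1) = g k / g n := by
  induction n, hkn using Nat.le_induction with
  | base => simp [div_self (hg k (by simp))]
  | succ n hkn ih =>
    rw [prod_Ico_succ_top hkn, ih fun s hs => hg s (by simp only [mem_Icc] at hs ⊢; omega),
      div_mul_div_cancel₀ (hg n (by simp only [mem_Icc]; omega))]

/-- The factor `d_j = a + b u_j`; the Kahan map of the statement has `a = 1 - εH`, `b = 2ε` and
numerator `c = 1 - ε²H²`. -/
noncomputable def kahanDen (a b : ℝ) (y : ℕ → ℝ) (j : ℕ) : ℝ := a + b * usum y j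

noncomputable def kahanMap (a b c : ℝ) (y : ℕ → ℝ) (j : ℕ) : ℝ :=
  y j * c / (kahanDen a b y (j - 1) * kahanDen a b y j)

section Kahan

variable {a b c : ℝ} {y : ℕ → ℝ}

lemma kahanDen_zero : kahanDen a b y 0 = a := by
  simp [kahanDen, usum_zero]

lemma usum_kahanMap {j : ℕ} (hd : ∀ i ≤ j, kahanDen a b y i ≠ 0) :
    usum (kahanMap a b c y) j = c * usum y j / (a * kahanDen a b y j) := by
  induction j with
  | zero => simp [usum_zero]
  | succ j ih =>
    have ha : a ≠ 0 := by simpa [kahanDen_zero] using hd 0 (Nat.zero_le _)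
    have hj := hd j (by omega)
    have hj' := hd (j + 1) le_rfl
    rw [usum_succ, ih fun i hi => hd i (by omega), kahanMap, Nat.add_sub_cancel]
    unfold kahanDen at hj hj' ⊢
    rw [usum_succ] at hj' ⊢
    rw [div_add_div _ _ (mul_ne_zero ha hj) (mul_ne_zero hj hj'),
      div_eq_div_iff (mul_ne_zero (mul_ne_zero ha hj) (mul_ne_zero hj hj')) (mul_ne_zero ha hj')]
    ring

lemma kahanMap_succ_div (hc : c ≠ 0) {j : ℕ} (hd₀ : kahanDen a b y (j - 1) ≠ 0)
    (hd₁ : kahanDen a b y j ≠ 0) (hd₂ : kahanDen a b y (j + 1) ≠ 0) :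
    kahanMap a b c y (j + 1) / kahanMap a b c y j =
      y (j + 1) / y j * (kahanDen a b y (j - 1) / kahanDen a b y (j + 1)) := by
  rw [kahanMap, kahanMap, Nat.add_sub_cancel]
  rcases eq_or_ne (y j) 0 with hy | hy
  · simp [hy]
  · field_simp

lemma prod_kahanMap_div (hc : c ≠ 0) {k n : ℕ} (hkn : k ≤ n)
    (hd : ∀ i ≤ 2 * n - 1, kahanDen a b y i ≠ 0) :
    ∏ s ∈ Ico k n, kahanMap a b c y (2 * s + 1) / kahanMap a b c y (2 * s) =
      (∏ s ∈ Ico k n, y (2 * s + 1) / y (2 * s)) *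
        (kahanDen a b y (2 * k - 1) / kahanDen a b y (2 * n - 1)) := by
  rw [← prod_Ico_div_succ_of_ne_zero (fun s => kahanDen a b y (2 * s - 1)) hkn
      fun s hs => hd _ (by simp only [mem_Icc] at hs; omega), ← prod_mul_distrib]
  refine prod_congr rfl fun s hs => ?_
  have hs : s < n := (mem_Ico.1 hs).2
  rw [kahanMap_succ_div hc (hd _ (by omega)) (hd _ (by omega)) (hd _ (by omega)),
    show 2 * (s + 1) - 1 = 2 * s + 1 by omega]

theorem FkN_kahanMap {m k : ℕ} (hm : Odd m) (hk : k ≤ (m + 1) / 2)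
    (hc : c = a * kahanDen a b y m) (hd : ∀ i ≤ m, kahanDen a b y i ≠ 0) :
    FkN m k (kahanMap a b c y) = FkN m k y := by
  obtain ⟨M, rfl⟩ := hm
  have ha : a ≠ 0 := by simpa [kahanDen_zero] using hd 0 (Nat.zero_le _)
  have hk' := hd (2 * k - 1) (by omega)
  have hm' := hd (2 * M + 1) le_rfl
  have hc₀ : c ≠ 0 := hc ▸ mul_ne_zero ha hm'
  change usum _ (2 * k - 1) * _ = usum y (2 * k - 1) * _
  rw [show (2 * M + 1 - 1) / 2 = M by omega, ← Ico_add_one_right_eq_Icc k M,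
    usum_kahanMap fun i hi => hd i (by omega),
    prod_kahanMap_div hc₀ (by omega) fun i hi => hd i (by omega),
    show 2 * (M + 1) - 1 = 2 * M + 1 by omega, hc]
  field_simp

end Kahan

theorem kahan_preserves_Fk_general (m : ℕ) (hm : Odd m) (k : ℕ) (hk2 : k ≤ (m + 1) / 2)
    (ε : ℝ) (y ty : ℕ → ℝ)
    (hden : ∀ j ≤ m, 1 - ε * usum y m + 2 * ε * usum y j ≠ 0)
    (hty : ∀ j, ty j = y j * (1 - ε ^ 2 * (usum y m) ^ 2) /
      ((1 - ε * usum y m + 2 * ε * usum y (j - 1)) * (1 - ε * usum y m + 2 * ε * usum y j))) :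
    FkN m k ty = FkN m k y := by
  obtain rfl : ty = kahanMap (1 - ε * usum y m) (2 * ε) (1 - ε ^ 2 * (usum y m) ^ 2) y :=
    funext hty
  exact FkN_kahanMap hm hk2 (by simp only [kahanDen]; ring) hden

/-- for `m` odd, the functions `F_k` are invariant under the Kahan map
`ỹ_j = y_j (1−ε²H²)/((1−εH+2εu_{j−1})(1−εH+2εu_j))`: `F_k(ỹ) = F_k(y)`. -/
theorem kahan_preserves_Fk (m : ℕ) (hm : Odd m) (k : ℕ) (hk1 : 1 ≤ k) (hk2 : k ≤ (m + 1) / 2)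
    (ε : ℝ) (y ty : ℕ → ℝ)
    (hynz : ∀ j ∈ Finset.Icc 1 m, y j ≠ 0)
    (hden : ∀ j ≤ m, 1 - ε * usum y m + 2 * ε * usum y j ≠ 0)
    (hP : 1 + ε * usum y m ≠ 0) (hM : 1 - ε * usum y m ≠ 0)
    (hty : ∀ j, ty j = y j * (1 - ε ^ 2 * (usum y m) ^ 2) /
      ((1 - ε * usum y m + 2 * ε * usum y (j - 1)) * (1 - ε * usum y m + 2 * ε * usum y j))) :
    FkN m k ty = FkN m k y :=
  kahan_preserves_Fk_general m hm k hk2 ε y ty hden hty
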